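/- arXiv:math/0605214 — 3 statements merged into one kernel-verified Lean document; each statement's English description precedes it below -/
import Mathlib

section
/- Let k ≥ U ≥ 1 and s an integer with U ≤ s. If ‖k θ_i‖ ≤ k^{-(2ν+3)} for all i ≤ d-1 and ‖s θ_d‖ ≤ s^{-(2ν+3)}, then sup_{1≤i≤d} ‖(ks) θ_i‖ ≤ (ks)^{-(ν+1/2)}, provided k ≤ ‖s θ_d‖^{-1/(2ν+2)}. -/
/-- Distance from a real number to the nearest integer. -/
noncomputable def distNearestInt (x : ℝ) : ℝ := |x - round x|

lemma distNearestInt_le_abs_sub_int (x : ℝ) (m : ℤ) :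
    distNearestInt x ≤ |x - m| := by
  unfold distNearestInt
  by_contra h
  push_neg at h
  have h1 : |x - round x| ≤ 1 / 2 := abs_sub_round x
  have h2 : |(round x : ℝ) - m| < 1 := by
    have he : (round x : ℝ) - m = (x - m) - (x - round x) := by ring
    calc |(round x : ℝ) - m| = |(x - m) - (x - round x)| := by rw [he]
      _ ≤ |x - m| + |x - round x| := abs_sub _ _
      _ < 1 := by linarith
  have h3 : round x = m := by
    have h4 : |((round x - m : ℤ) : ℝ)| < 1 := by push_cast; exact h2
    rw [← Int.cast_abs] at h4
    have h5 : |round x - m| < 1 := by exact_mod_cast h4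
    rw [abs_lt] at h5
    omega
  rw [h3] at h
  exact lt_irrefl _ h

lemma distNearestInt_nat_mul (n : ℕ) (x : ℝ) :
    distNearestInt ((n : ℝ) * x) ≤ (n : ℝ) * distNearestInt x := by
  calc distNearestInt ((n : ℝ) * x) ≤ |(n : ℝ) * x - ((n : ℤ) * round x : ℤ)| :=
        distNearestInt_le_abs_sub_int _ _
    _ = (n : ℝ) * |x - round x| := by
        push_cast
        rw [show (n : ℝ) * x - (n : ℝ) * round x = (n : ℝ) * (x - round x) by ring,
          abs_mul, Nat.abs_cast]
    _ = (n : ℝ) * distNearestInt x := rfl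

lemma distNearestInt_nonneg (x : ℝ) : 0 ≤ distNearestInt x := abs_nonneg _

/-- The key inequality in the proof of Lemma 4: simultaneous approximations
`‖kθ_i‖ ≤ k^{-(2ν+3)}` for `i ≤ d-1` together with `‖sθ_d‖ ≤ s^{-(2ν+3)}` force a
simultaneous resonance `‖(ks)θ_i‖ ≤ (ks)^{-(ν+1/2)}` for all `i ≤ d`,
provided `k ≤ ‖sθ_d‖^{-1/(2ν+2)}`. -/
theorem resonance_product
    (θ : ℕ → ℝ) (ν : ℝ) (hν : 0 < ν) (d : ℕ) (hd : 2 ≤ d)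
    (k s : ℕ) (U : ℝ) (hU : 1 ≤ U) (hUk : U ≤ (k : ℝ)) (hUs : U ≤ (s : ℝ))
    (hsk : s ≤ k)
    (h1 : ∀ i, 1 ≤ i → i ≤ d - 1 →
      distNearestInt ((k : ℝ) * θ i) ≤ (k : ℝ) ^ (-(2 * ν + 3)))
    (h2 : distNearestInt ((s : ℝ) * θ d) ≤ (s : ℝ) ^ (-(2 * ν + 3)))
    (hk : (k : ℝ) ≤ (distNearestInt ((s : ℝ) * θ d)) ^ (-(1 / (2 * ν + 2)))) :
    ∀ i, 1 ≤ i → i ≤ d →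
      distNearestInt (((k * s : ℕ) : ℝ) * θ i) ≤ ((k * s : ℕ) : ℝ) ^ (-(ν + 1 / 2)) := by
  set K : ℝ := (k : ℝ) with hKdef
  set S : ℝ := (s : ℝ) with hSdef
  have hK1 : 1 ≤ K := hU.trans hUk
  have hS1 : 1 ≤ S := hU.trans hUs
  have hK0 : 0 < K := lt_of_lt_of_le one_pos hK1
  have hS0 : 0 < S := lt_of_lt_of_le one_pos hS1
  have hSK : S ≤ K := by simp only [hKdef, hSdef]; exact_mod_cast hsk
  set δ : ℝ := distNearestInt ((s : ℝ) * θ d) with hδdef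
  have hδ0 : 0 ≤ δ := distNearestInt_nonneg _
  have hne : -(1 / (2 * ν + 2)) ≠ 0 := by
    have : (0 : ℝ) < 1 / (2 * ν + 2) := by positivity
    linarith
  have hδpos : 0 < δ := by
    rcases hδ0.lt_or_eq with h | h
    · exact h
    · exfalso
      rw [← h, Real.zero_rpow hne] at hk
      linarith
  -- δ ≤ K ^ (-(2ν+2))
  have hδK : δ ≤ K ^ (-(2 * ν + 2)) := by
    have hexp : (0 : ℝ) < 2 * ν + 2 := by linarith
    have h3 : K ^ (2 * ν + 2) ≤ (δ ^ (-(1 / (2 * ν + 2)))) ^ (2 * ν + 2) :=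
      Real.rpow_le_rpow hK0.le hk hexp.le
    rw [← Real.rpow_mul hδ0] at h3
    have : -(1 / (2 * ν + 2)) * (2 * ν + 2) = -1 := by
      field_simp
    rw [this, Real.rpow_neg_one] at h3
    have h4 : δ ≤ (K ^ (2 * ν + 2))⁻¹ :=
      (le_inv_comm₀ hδpos (by positivity)).mpr h3
    rwa [← Real.rpow_neg hK0.le] at h4
  -- key bound : K ^ (-(2ν+1)) ≤ (ks) ^ (-(ν+1/2))
  have hKS : ((k * s : ℕ) : ℝ) = K * S := by push_cast; ring
  have hmain : K ^ (-(2 * ν + 1)) ≤ ((k * s : ℕ) : ℝ) ^ (-(ν + 1 / 2)) := by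
    rw [hKS, Real.mul_rpow hK0.le hS0.le]
    have e1 : K ^ (-(2 * ν + 1)) = K ^ (-(ν + 1/2)) * K ^ (-(ν + 1/2)) := by
      rw [← Real.rpow_add hK0]; ring_nf
    rw [e1]
    have e2 : K ^ (-(ν + 1/2)) ≤ S ^ (-(ν + 1/2)) :=
      Real.rpow_le_rpow_of_nonpos hS0 hSK (by linarith)
    have e3 : 0 ≤ K ^ (-(ν + 1/2)) := Real.rpow_nonneg hK0.le _
    exact mul_le_mul_of_nonneg_left e2 e3
  intro i hi1 hid
  rcases eq_or_lt_of_le hid with rfl | hlt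
  · -- case i = d
    have hb : distNearestInt (((k * s : ℕ) : ℝ) * θ i) ≤ K * δ := by
      have : ((k * s : ℕ) : ℝ) * θ i = (k : ℝ) * ((s : ℝ) * θ i) := by push_cast; ring
      rw [this]
      exact distNearestInt_nat_mul k _
    calc distNearestInt (((k * s : ℕ) : ℝ) * θ i) ≤ K * δ := hb
      _ ≤ K * K ^ (-(2 * ν + 2)) := by
          exact mul_le_mul_of_nonneg_left hδK hK0.le
      _ = K ^ (-(2 * ν + 1)) := by
          nth_rewrite 1 [← Real.rpow_one K]
          rw [← Real.rpow_add hK0]; ring_nf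
      _ ≤ ((k * s : ℕ) : ℝ) ^ (-(ν + 1 / 2)) := hmain
  · -- case i ≤ d - 1
    have hid1 : i ≤ d - 1 := by omega
    have hb : distNearestInt (((k * s : ℕ) : ℝ) * θ i) ≤ S * (K ^ (-(2 * ν + 3))) := by
      have h5 : ((k * s : ℕ) : ℝ) * θ i = (s : ℝ) * ((k : ℝ) * θ i) := by push_cast; ring
      rw [h5]
      calc distNearestInt ((s : ℝ) * ((k : ℝ) * θ i)) ≤ S * distNearestInt ((k : ℝ) * θ i) :=
            distNearestInt_nat_mul s _
        _ ≤ S * (K ^ (-(2 * ν + 3))) :=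
            mul_le_mul_of_nonneg_left (h1 i hi1 hid1) hS0.le
    calc distNearestInt (((k * s : ℕ) : ℝ) * θ i) ≤ S * K ^ (-(2 * ν + 3)) := hb
      _ ≤ K * K ^ (-(2 * ν + 3)) :=
          mul_le_mul_of_nonneg_right hSK (Real.rpow_nonneg hK0.le _)
      _ = K ^ (-(2 * ν + 2)) := by
          nth_rewrite 1 [← Real.rpow_one K]
          rw [← Real.rpow_add hK0]; ring_nf
      _ ≤ K ^ (-(2 * ν + 1)) :=
          Real.rpow_le_rpow_of_exponent_le hK1 (by linarith)
      _ ≤ ((k * s : ℕ) : ℝ) ^ (-(ν + 1 / 2)) := hmain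
end

section
/- Let θ be irrational with convergents denominators (q_n), and suppose θ satisfies ‖m θ‖ ≥ m^{-τ} for every integer m in an interval [A, V] with A ≥ 2 and τ > 1. If q_l ≤ A and q_{l+1} ≥ A^{2τ}, then there is an integer m with A ≤ m ≤ A^{2τ} and ‖m θ‖ < m^{-τ}, a contradiction; hence θ has a convergent denominator in the interval [A, A^{2τ}] provided A^{2τ} ≤ V. -/
lemma distNearestInt_le_abs_sub (x : ℝ) (n : ℤ) : distNearestInt x ≤ |x - n| :=
  round_le x n

lemma distNearestInt_nsmul_le (c : ℕ) (x : ℝ) :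
    distNearestInt ((c : ℝ) * x) ≤ (c : ℝ) * distNearestInt x := by
  have h := distNearestInt_le_abs_sub ((c : ℝ) * x) ((c : ℤ) * round x)
  calc distNearestInt ((c : ℝ) * x) ≤ |(c : ℝ) * x - ((c : ℤ) * round x : ℤ)| := h
    _ = (c : ℝ) * |x - round x| := by
        push_cast
        rw [← mul_sub, abs_mul, abs_of_nonneg (by positivity : (0:ℝ) ≤ (c:ℝ))]
    _ = (c : ℝ) * distNearestInt x := rfl

/-- Pigeonhole: some multiple `d θ`, `0 < d < N`, is within `1/(N-1)` of an integer. -/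
lemma exists_small_distNearestInt (θ : ℝ) (N : ℕ) (hN : 2 ≤ N) :
    ∃ d : ℕ, 0 < d ∧ d < N ∧ distNearestInt ((d : ℝ) * θ) < 1 / ((N : ℝ) - 1) := by
  set M : ℕ := N - 1 with hM
  have hM1 : 1 ≤ M := by omega
  have hMN : (M : ℝ) = (N : ℝ) - 1 := by
    have : (M : ℕ) + 1 = N := by omega
    push_cast [← this]; ring
  have hMpos : (0 : ℝ) < M := by exact_mod_cast hM1
  set f : ℕ → ℕ := fun k => (⌊Int.fract ((k : ℝ) * θ) * M⌋).toNat with hf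
  have hmap : ∀ k ∈ Finset.range N, f k ∈ Finset.range M := by
    intro k _
    simp only [Finset.mem_range, hf]
    have h0 : 0 ≤ Int.fract ((k : ℝ) * θ) := Int.fract_nonneg _
    have h1 : Int.fract ((k : ℝ) * θ) < 1 := Int.fract_lt_one _
    have hlt : Int.fract ((k : ℝ) * θ) * M < (M : ℝ) := by nlinarith
    have hfl : ⌊Int.fract ((k : ℝ) * θ) * M⌋ < (M : ℤ) := by
      apply Int.floor_lt.mpr; exact_mod_cast hlt
    omega
  have hcard : (Finset.range M).card < (Finset.range N).card := by
    simp only [Finset.card_range]; omega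
  obtain ⟨a, ha, b, hb, hne, hfab⟩ :=
    Finset.exists_ne_map_eq_of_card_lt_of_maps_to hcard hmap
  -- wlog a < b
  obtain ⟨a, b, hab, hbN, hfeq⟩ : ∃ a b : ℕ, a < b ∧ b < N ∧ f a = f b := by
    rcases lt_or_gt_of_ne hne with h | h
    · exact ⟨a, b, h, Finset.mem_range.mp hb, hfab⟩
    · exact ⟨b, a, h, Finset.mem_range.mp ha, hfab.symm⟩
  refine ⟨b - a, by omega, by omega, ?_⟩
  have hfloornn : ∀ k : ℕ, (0 : ℤ) ≤ ⌊Int.fract ((k : ℝ) * θ) * M⌋ := fun k =>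
    Int.floor_nonneg.mpr (mul_nonneg (Int.fract_nonneg _) hMpos.le)
  have hfloor_eq : ⌊Int.fract ((a : ℝ) * θ) * M⌋ = ⌊Int.fract ((b : ℝ) * θ) * M⌋ := by
    have h1 := hfloornn a
    have h2 := hfloornn b
    simp only [hf] at hfeq
    omega
  have habs1 : |Int.fract ((a : ℝ) * θ) * M - Int.fract ((b : ℝ) * θ) * M| < 1 :=
    Int.abs_sub_lt_one_of_floor_eq_floor hfloor_eq
  have habs : |Int.fract ((b : ℝ) * θ) - Int.fract ((a : ℝ) * θ)| < 1 / (M : ℝ) := by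
    rw [lt_div_iff₀ hMpos]
    calc |Int.fract ((b : ℝ) * θ) - Int.fract ((a : ℝ) * θ)| * M
        = |(Int.fract ((b : ℝ) * θ) - Int.fract ((a : ℝ) * θ)) * M| := by
          rw [abs_mul, abs_of_nonneg hMpos.le]
      _ = |Int.fract ((a : ℝ) * θ) * M - Int.fract ((b : ℝ) * θ) * M| := by
          rw [← abs_neg]; ring_nf
      _ < 1 := habs1
  have hcast : ((b - a : ℕ) : ℝ) = (b : ℝ) - (a : ℝ) := by
    push_cast [Nat.cast_sub hab.le]; ring
  have key : distNearestInt (((b - a : ℕ) : ℝ) * θ)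
      ≤ |Int.fract ((b : ℝ) * θ) - Int.fract ((a : ℝ) * θ)| := by
    have h := distNearestInt_le_abs_sub (((b - a : ℕ) : ℝ) * θ)
      (⌊(b : ℝ) * θ⌋ - ⌊(a : ℝ) * θ⌋)
    calc distNearestInt (((b - a : ℕ) : ℝ) * θ)
        ≤ |((b - a : ℕ) : ℝ) * θ - ((⌊(b : ℝ) * θ⌋ - ⌊(a : ℝ) * θ⌋ : ℤ) : ℝ)| := h
      _ = |Int.fract ((b : ℝ) * θ) - Int.fract ((a : ℝ) * θ)| := by
          rw [hcast]
          unfold Int.fract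
          push_cast
          ring_nf
  rw [← hMN]
  exact lt_of_le_of_lt key habs

set_option maxHeartbeats 1000000 in
/-- If `θ` is Diophantine of exponent `τ` on the integer range `[A^{1/(2τ)}, V]`
(with `A^{2τ}... ` as in the paper, i.e. `A ≤ V`) and `A^{1/(2τ)}` is large enough, then `θ`
has a continued-fraction denominator in the interval `[A^{1/(2τ)}, A]`. -/
theorem denominator_in_window
    (τ : ℝ) (hτ : 1 < τ) :
    ∃ U₀ : ℝ, ∀ (A V : ℝ), U₀ ≤ A ^ (1 / (2 * τ)) → (2 : ℝ) ≤ A → A ≤ V →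
      ∀ (θ : ℝ), Irrational θ →
      ∀ (q : ℕ → ℕ), q 1 = 1 → StrictMono q →
        (∀ n k : ℕ, 0 < k → k < q (n + 1) → k ≠ q n →
          distNearestInt ((q n : ℝ) * θ) < distNearestInt ((k : ℝ) * θ)) →
        (∀ m : ℕ, A ^ (1 / (2 * τ)) ≤ (m : ℝ) → (m : ℝ) ≤ V →
          (m : ℝ) ^ (-τ) ≤ distNearestInt ((m : ℝ) * θ)) →
        ∃ l : ℕ, A ^ (1 / (2 * τ)) ≤ (q l : ℝ) ∧ (q l : ℝ) ≤ A := by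
  have hτ1 : (0 : ℝ) < τ - 1 := by linarith
  refine ⟨max 2 ((2 : ℝ) ^ ((τ + 2) / (τ - 1))), ?_⟩
  intro A V hU hA2 hAV θ hθ q hq1 hqmono hbest hdio
  set B : ℝ := A ^ (1 / (2 * τ)) with hBdef
  have hApos : (0 : ℝ) < A := by linarith
  have hB2 : (2 : ℝ) ≤ B := le_trans (le_max_left _ _) hU
  have hBpos : (0 : ℝ) < B := by linarith
  have h2τ : (0 : ℝ) < 2 * τ := by linarith
  -- A = B ^ (2τ)
  have hBA : B ^ (2 * τ) = A := by
    rw [hBdef, ← Real.rpow_mul hApos.le]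
    rw [one_div_mul_cancel (ne_of_gt h2τ), Real.rpow_one]
  -- B^{τ-1} ≥ 2^{τ+2}
  have hBbig : (2 : ℝ) ^ (τ + 2) ≤ B ^ (τ - 1) := by
    have h1 : (2 : ℝ) ^ ((τ + 2) / (τ - 1)) ≤ B := le_trans (le_max_right _ _) hU
    have h2 : ((2 : ℝ) ^ ((τ + 2) / (τ - 1))) ^ (τ - 1) ≤ B ^ (τ - 1) :=
      Real.rpow_le_rpow (by positivity) h1 hτ1.le
    rwa [← Real.rpow_mul (by norm_num), div_mul_cancel₀ _ (ne_of_gt hτ1)] at h2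
  -- 2B ≤ A
  have h2BA : 2 * B ≤ A := by
    have h1 : B ^ (2 : ℝ) ≤ B ^ (2 * τ) :=
      Real.rpow_le_rpow_of_exponent_le (by linarith) (by linarith)
    have h2 : B ^ (2 : ℝ) = B * B := by
      rw [show (2 : ℝ) = ((2 : ℕ) : ℝ) by norm_num, Real.rpow_natCast]; ring
    have h3 : 2 * B ≤ B * B := by nlinarith
    have h4 : B * B ≤ A := by
      calc B * B = B ^ (2 : ℝ) := h2.symm
        _ ≤ B ^ (2 * τ) := h1
        _ = A := hBA
    exact le_trans h3 h4
  by_contra hcon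
  push_neg at hcon
  -- find largest l with q l ≤ A
  have hP : ∃ n, A < (q n : ℕ) := by
    refine ⟨⌈A⌉₊ + 1, ?_⟩
    have h1 : (⌈A⌉₊ + 1 : ℕ) ≤ q (⌈A⌉₊ + 1) := hqmono.le_apply
    have h2 : A ≤ (⌈A⌉₊ : ℝ) := Nat.le_ceil A
    have h3 : ((⌈A⌉₊ + 1 : ℕ) : ℝ) ≤ (q (⌈A⌉₊ + 1) : ℝ) := by exact_mod_cast h1
    push_cast at h3
    linarith
  classical
  have hq0 : q 0 = 0 := by
    have := hqmono (show 0 < 1 by norm_num)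
    omega
  have hnot0 : ¬ A < (q 0 : ℝ) := by rw [hq0]; push_cast; linarith
  have hnot1 : ¬ A < (q 1 : ℝ) := by rw [hq1]; push_cast; linarith
  have hfind0 : Nat.find hP ≠ 0 := fun h => hnot0 (h ▸ Nat.find_spec hP)
  have hfind1 : Nat.find hP ≠ 1 := fun h => hnot1 (h ▸ Nat.find_spec hP)
  obtain ⟨l, hl1, hqlA, hN⟩ :
      ∃ l : ℕ, 1 ≤ l ∧ (q l : ℝ) ≤ A ∧ A < (q (l + 1) : ℝ) := by
    refine ⟨Nat.find hP - 1, by omega, ?_, ?_⟩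
    · have := Nat.find_min hP (show Nat.find hP - 1 < Nat.find hP by omega)
      linarith [not_lt.mp this]
    · have h : Nat.find hP - 1 + 1 = Nat.find hP := by omega
      rw [h]
      exact Nat.find_spec hP
  have hqlB : (q l : ℝ) < B := by
    by_contra h
    exact absurd hqlA (not_le.mpr (hcon l (not_lt.mp h)))
  have hql1 : 1 ≤ q l := by
    have : q 1 ≤ q l := hqmono.le_iff_le.mpr hl1
    omega
  have hN2 : 2 ≤ q (l + 1) := by
    by_contra h
    push_neg at h
    have : ((q (l+1) : ℕ) : ℝ) ≤ 1 := by exact_mod_cast Nat.lt_succ_iff.mp h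
    linarith
  -- pigeonhole: dist(q l θ) < 1/(N-1)
  obtain ⟨d, hd0, hdN, hdist⟩ := exists_small_distNearestInt θ (q (l + 1)) hN2
  have hqlθ : distNearestInt ((q l : ℝ) * θ) < 1 / ((q (l + 1) : ℝ) - 1) := by
    by_cases hd : d = q l
    · rwa [← hd]
    · exact lt_trans (hbest l d hd0 hdN hd) hdist
  have hA1pos : (0 : ℝ) < A - 1 := by linarith
  have hqlθ2 : distNearestInt ((q l : ℝ) * θ) < 2 / A := by
    have h1 : 1 / ((q (l + 1) : ℝ) - 1) ≤ 1 / (A - 1) :=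
      one_div_le_one_div_of_le hA1pos (by linarith)
    have h2 : 1 / (A - 1) ≤ 2 / A := by
      rw [div_le_div_iff₀ hA1pos hApos]; linarith
    linarith
  -- build m := c * q l
  have hspos : (0 : ℝ) < ((q l : ℕ) : ℝ) := by exact_mod_cast hql1
  have hc1 : 1 ≤ ⌈B / ((q l : ℕ) : ℝ)⌉₊ := Nat.one_le_ceil_iff.mpr (by positivity)
  have hcpos : (0 : ℝ) < (⌈B / ((q l : ℕ) : ℝ)⌉₊ : ℝ) := by exact_mod_cast hc1
  have hmcast : ((⌈B / ((q l : ℕ) : ℝ)⌉₊ * q l : ℕ) : ℝ)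
      = (⌈B / ((q l : ℕ) : ℝ)⌉₊ : ℝ) * ((q l : ℕ) : ℝ) := by push_cast; ring
  have hBm : B ≤ ((⌈B / ((q l : ℕ) : ℝ)⌉₊ * q l : ℕ) : ℝ) := by
    have h1 : B / ((q l : ℕ) : ℝ) ≤ (⌈B / ((q l : ℕ) : ℝ)⌉₊ : ℝ) := Nat.le_ceil _
    rw [hmcast]
    calc B = B / ((q l : ℕ) : ℝ) * (q l : ℝ) := by field_simp
      _ ≤ (⌈B / ((q l : ℕ) : ℝ)⌉₊ : ℝ) * (q l : ℝ) :=
        mul_le_mul_of_nonneg_right h1 hspos.le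
  have hcB : (⌈B / ((q l : ℕ) : ℝ)⌉₊ : ℝ) < B / ((q l : ℕ) : ℝ) + 1 :=
    Nat.ceil_lt_add_one (by positivity)
  have hdivle : B / ((q l : ℕ) : ℝ) ≤ B := by
    rw [div_le_iff₀ hspos]
    exact le_mul_of_one_le_right hBpos.le (by exact_mod_cast hql1)
  have hcle : (⌈B / ((q l : ℕ) : ℝ)⌉₊ : ℝ) ≤ 2 * B := by linarith
  have hm2B : ((⌈B / ((q l : ℕ) : ℝ)⌉₊ * q l : ℕ) : ℝ) ≤ 2 * B := by
    rw [hmcast]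
    have h1 : (⌈B / ((q l : ℕ) : ℝ)⌉₊ : ℝ) * (q l : ℝ)
        ≤ (B / ((q l : ℕ) : ℝ) + 1) * (q l : ℝ) :=
      mul_le_mul_of_nonneg_right hcB.le hspos.le
    have h2 : (B / ((q l : ℕ) : ℝ) + 1) * (q l : ℝ) = B + (q l : ℝ) := by field_simp
    linarith
  have hmV : ((⌈B / ((q l : ℕ) : ℝ)⌉₊ * q l : ℕ) : ℝ) ≤ V := by linarith
  have hdio_m := hdio (⌈B / ((q l : ℕ) : ℝ)⌉₊ * q l) hBm hmV
  -- upper bound dist(mθ)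
  have hup : distNearestInt (((⌈B / ((q l : ℕ) : ℝ)⌉₊ * q l : ℕ) : ℝ) * θ) < 4 * B / A := by
    have h1 : distNearestInt (((⌈B / ((q l : ℕ) : ℝ)⌉₊ * q l : ℕ) : ℝ) * θ)
        ≤ (⌈B / ((q l : ℕ) : ℝ)⌉₊ : ℝ) * distNearestInt ((q l : ℝ) * θ) := by
      have h := distNearestInt_nsmul_le ⌈B / ((q l : ℕ) : ℝ)⌉₊ ((q l : ℝ) * θ)
      rw [hmcast, mul_assoc]
      exact h
    have h2 : (⌈B / ((q l : ℕ) : ℝ)⌉₊ : ℝ) * distNearestInt ((q l : ℝ) * θ)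
        < (⌈B / ((q l : ℕ) : ℝ)⌉₊ : ℝ) * (2 / A) :=
      mul_lt_mul_of_pos_left hqlθ2 hcpos
    have h3 : (⌈B / ((q l : ℕ) : ℝ)⌉₊ : ℝ) * (2 / A) ≤ 2 * B * (2 / A) :=
      mul_le_mul_of_nonneg_right hcle (by positivity)
    have h4 : 2 * B * (2 / A) = 4 * B / A := by ring
    linarith
  -- lower bound: (2B)^{-τ} ≤ m^{-τ}
  have hlow : (2 * B) ^ (-τ) ≤ ((⌈B / ((q l : ℕ) : ℝ)⌉₊ * q l : ℕ) : ℝ) ^ (-τ) :=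
    Real.rpow_le_rpow_of_nonpos (by linarith) hm2B (by linarith)
  have hfinal : (2 * B) ^ (-τ) < 4 * B / A := by linarith
  -- derive B^{τ-1} < 2^{τ+2}, contradiction
  have hcontra : B ^ (τ - 1) < (2 : ℝ) ^ (τ + 2) := by
    have hlog2 : Real.exp (Real.log 2) = 2 := Real.exp_log (by norm_num)
    have hlogB : Real.exp (Real.log B) = B := Real.exp_log hBpos
    have e1 : (2 * B) ^ (-τ) = Real.exp ((Real.log 2 + Real.log B) * -τ) := by
      rw [Real.rpow_def_of_pos (by linarith), Real.log_mul (by norm_num) (ne_of_gt hBpos)]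
    have e2 : 4 * B / A = Real.exp (2 * Real.log 2 + Real.log B - 2 * τ * Real.log B) := by
      rw [Real.exp_sub, Real.exp_add]
      rw [show Real.exp (2 * Real.log 2) = Real.exp (Real.log 2) * Real.exp (Real.log 2) by
        rw [← Real.exp_add]; ring_nf]
      rw [hlog2, hlogB, ← hBA, Real.rpow_def_of_pos hBpos]
      ring_nf
    have e3 : B ^ (τ - 1) = Real.exp (Real.log B * (τ - 1)) :=
      Real.rpow_def_of_pos hBpos _
    have e4 : (2 : ℝ) ^ (τ + 2) = Real.exp (Real.log 2 * (τ + 2)) :=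
      Real.rpow_def_of_pos (by norm_num) _
    rw [e1, e2] at hfinal
    have h5 := Real.exp_lt_exp.mp hfinal
    rw [e3, e4]
    exact Real.exp_lt_exp.mpr (by linarith)
  linarith
end

section
/- Let θ be irrational with denominator sequence (q_n) and suppose for some a ∈ (0,1) there are infinitely many k ∈ ℕ with ‖kθ‖ ≤ a^k. Then θ is a Liouville number: for every τ > 0 there are infinitely many n with q_{n+1} > q_n^τ. -/
open Filter

lemma one_lt_two_mul_mul_distNearestInt (θ : ℝ) {m m' : ℕ}
    (h : (m : ℝ) * distNearestInt (m' * θ) < m' * distNearestInt (m * θ)) :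
    1 < 2 * m' * distNearestInt (m * θ) := by
  set x : ℝ := m * (m' * θ - round ((m' : ℝ) * θ))
  set y : ℝ := m' * (m * θ - round ((m : ℝ) * θ))
  have hx : |x| = m * distNearestInt (m' * θ) := by
    rw [abs_mul, Nat.abs_cast, distNearestInt]
  have hy : |y| = m' * distNearestInt (m * θ) := by
    rw [abs_mul, Nat.abs_cast, distNearestInt]
  have hxy : x - y = ((m' * round ((m : ℝ) * θ) - m * round ((m' : ℝ) * θ) : ℤ) : ℝ) := by
    push_cast
    ring
  have hne : x - y ≠ 0 := by
    intro h0
    rw [sub_eq_zero.mp h0, hy] at hx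
    exact h.ne' hx
  have hone : 1 ≤ |x - y| := by
    rw [hxy] at hne ⊢
    exact_mod_cast Int.one_le_abs (by exact_mod_cast hne)
  calc 1 ≤ |x - y| := hone
    _ ≤ |x| + |y| := abs_sub _ _
    _ < 2 * m' * distNearestInt (m * θ) := by rw [hx, hy]; linarith

lemma eventually_two_mul_rpow_mul_pow_lt_one {a : ℝ} (ha0 : 0 ≤ a) (ha1 : a < 1) (τ : ℝ) :
    ∀ᶠ m : ℕ in atTop, 2 * (m : ℝ) ^ τ * a ^ m < 1 := by
  have hlim := tendsto_pow_const_mul_const_pow_of_lt_one ⌈τ⌉₊ ha0 ha1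
  filter_upwards [hlim.eventually_lt_const one_half_pos, eventually_ge_atTop 1] with m hm hm1
  have hτ : (m : ℝ) ^ τ ≤ (m : ℝ) ^ ⌈τ⌉₊ := by
    rw [← Real.rpow_natCast]
    exact Real.rpow_le_rpow_of_exponent_le (by exact_mod_cast hm1) (Nat.le_ceil τ)
  have hτa := mul_le_mul_of_nonneg_right hτ (pow_nonneg ha0 m)
  linarith

section BestApproximation

variable {θ : ℝ} {q : ℕ → ℕ}

lemma distNearestInt_denom_le_of_lt_denom_succ
    (hbest : ∀ n k : ℕ, 0 < k → k < q (n + 1) → k ≠ q n →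
      distNearestInt ((q n : ℝ) * θ) < distNearestInt ((k : ℝ) * θ))
    {n k : ℕ} (hk : 0 < k) (hkq : k < q (n + 1)) :
    distNearestInt ((q n : ℝ) * θ) ≤ distNearestInt ((k : ℝ) * θ) := by
  rcases eq_or_ne k (q n) with rfl | hne
  · exact le_rfl
  · exact (hbest n k hk hkq hne).le

lemma one_lt_two_mul_denom_succ_mul_distNearestInt (hqmono : StrictMono q)
    (hbest : ∀ n k : ℕ, 0 < k → k < q (n + 1) → k ≠ q n →
      distNearestInt ((q n : ℝ) * θ) < distNearestInt ((k : ℝ) * θ))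
    {n : ℕ} (hn : 0 < q n) :
    1 < 2 * (q (n + 1) : ℝ) * distNearestInt ((q n : ℝ) * θ) := by
  have hlt : q n < q (n + 1) := hqmono n.lt_succ_self
  have hdist : distNearestInt ((q (n + 1) : ℝ) * θ) < distNearestInt ((q n : ℝ) * θ) :=
    hbest (n + 1) (q n) hn (hlt.trans (hqmono (n + 1).lt_succ_self)) hlt.ne
  apply one_lt_two_mul_mul_distNearestInt
  calc (q n : ℝ) * distNearestInt ((q (n + 1) : ℝ) * θ)
      ≤ q (n + 1) * distNearestInt ((q (n + 1) : ℝ) * θ) := by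
        gcongr
        exact abs_nonneg _
    _ < q (n + 1) * distNearestInt ((q n : ℝ) * θ) := by
        gcongr
        exact_mod_cast hn.trans hlt

lemma frequently_distNearestInt_denom_le_pow (hqmono : StrictMono q)
    (hbest : ∀ n k : ℕ, 0 < k → k < q (n + 1) → k ≠ q n →
      distNearestInt ((q n : ℝ) * θ) < distNearestInt ((k : ℝ) * θ))
    {a : ℝ} (ha0 : 0 ≤ a) (ha1 : a ≤ 1)
    (happrox : ∃ᶠ k : ℕ in atTop, distNearestInt ((k : ℝ) * θ) ≤ a ^ k) :
    ∃ᶠ n in atTop, distNearestInt ((q n : ℝ) * θ) ≤ a ^ q n := by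
  rw [frequently_atTop]
  intro N
  obtain ⟨k, hk, hka⟩ := frequently_atTop.mp happrox (q (N + 1))
  have hq0 : q 0 < k + 1 := Nat.lt_succ_of_le ((hqmono.monotone (Nat.zero_le _)).trans hk)
  obtain ⟨n, hnk, hkn⟩ := hqmono.exists_between_of_tendsto_atTop hqmono.tendsto_atTop hq0
  have hNn : N + 1 < n + 1 := hqmono.lt_iff_lt.mp (hk.trans_lt hkn)
  have hk0 : 0 < k := N.succ_pos.trans_le ((hqmono.id_le _).trans hk)
  refine ⟨n, by omega, ?_⟩
  calc distNearestInt ((q n : ℝ) * θ) ≤ distNearestInt ((k : ℝ) * θ) :=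
        distNearestInt_denom_le_of_lt_denom_succ hbest hk0 hkn
    _ ≤ a ^ k := hka
    _ ≤ a ^ q n := pow_le_pow_of_le_one ha0 ha1 (Nat.le_of_lt_succ hnk)

end BestApproximation

theorem exponential_approximation_implies_liouville_general
    (θ : ℝ)
    (q : ℕ → ℕ) (hqmono : StrictMono q)
    (hbest : ∀ n k : ℕ, 0 < k → k < q (n + 1) → k ≠ q n →
      distNearestInt ((q n : ℝ) * θ) < distNearestInt ((k : ℝ) * θ))
    (a : ℝ) (ha0 : 0 < a) (ha1 : a < 1)
    (happrox : ∃ᶠ k : ℕ in Filter.atTop, distNearestInt ((k : ℝ) * θ) ≤ a ^ k) :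
    ∀ τ : ℝ, 0 < τ → ∃ᶠ n in Filter.atTop, (q n : ℝ) ^ τ < (q (n + 1) : ℝ) := by
  intro τ _
  have hlower : ∀ᶠ n in atTop, 1 < 2 * (q (n + 1) : ℝ) * distNearestInt ((q n : ℝ) * θ) :=
    (eventually_ge_atTop 1).mono fun n hn =>
      one_lt_two_mul_denom_succ_mul_distNearestInt hqmono hbest (hn.trans (hqmono.id_le n))
  have hsmall : ∀ᶠ n in atTop, 2 * (q n : ℝ) ^ τ * a ^ q n < 1 :=
    hqmono.tendsto_atTop.eventually (eventually_two_mul_rpow_mul_pow_lt_one ha0.le ha1 τ)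
  refine ((frequently_distNearestInt_denom_le_pow hqmono hbest ha0.le ha1.le happrox).and_eventually
    (hlower.and hsmall)).mono ?_
  rintro n ⟨hclose, hlow, hsm⟩
  have hcompare : (q n : ℝ) ^ τ * (2 * a ^ q n) < q (n + 1) * (2 * a ^ q n) :=
    calc (q n : ℝ) ^ τ * (2 * a ^ q n) = 2 * (q n : ℝ) ^ τ * a ^ q n := by ring
      _ < 1 := hsm
      _ < 2 * q (n + 1) * distNearestInt ((q n : ℝ) * θ) := hlow
      _ ≤ 2 * q (n + 1) * a ^ q n := by gcongr
      _ = q (n + 1) * (2 * a ^ q n) := by ring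
  exact lt_of_mul_lt_mul_right hcompare (by positivity)

/-- If `‖kθ‖ ≤ a^k` for some `a ∈ (0,1)` and infinitely many `k`, then `θ` is Liouville:
for every `τ > 0` there are infinitely many `n` with `q_{n+1} > q_n^τ`. -/
theorem exponential_approximation_implies_liouville
    (θ : ℝ) (hθ : Irrational θ)
    (q : ℕ → ℕ) (hq1 : q 1 = 1) (hqmono : StrictMono q)
    (hbest : ∀ n k : ℕ, 0 < k → k < q (n + 1) → k ≠ q n →
      distNearestInt ((q n : ℝ) * θ) < distNearestInt ((k : ℝ) * θ))
    (a : ℝ) (ha0 : 0 < a) (ha1 : a < 1)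
    (happrox : ∃ᶠ k : ℕ in Filter.atTop, distNearestInt ((k : ℝ) * θ) ≤ a ^ k) :
    ∀ τ : ℝ, 0 < τ → ∃ᶠ n in Filter.atTop, (q n : ℝ) ^ τ < (q (n + 1) : ℝ) :=
  exponential_approximation_implies_liouville_general θ q hqmono hbest a ha0 ha1 happrox
end
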